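/- Let G be a graph on n vertices and let r be a positive integer. Then G contains a relatively (1/r)-full induced subgraph on m vertices for some m ∈ {⌊n/r⌋, ⌈n/r⌉, ⌈n/r⌉ + 1}. -/

import Mathlib

open scoped Classical

/-- Number of neighbours of `v` inside `S`. -/
noncomputable def degIn {V : Type*} (G : SimpleGraph V) (S : Finset V) (v : V) : ℕ :=
  (S.filter fun u => G.Adj v u).card

/-- `S` induces a full subgraph for density `p`: every vertex of `S` has
at least `p * (|S| - 1)` neighbours inside `S`. -/
def IsFull {V : Type*} (G : SimpleGraph V) (p : ℝ) (S : Finset V) : Prop :=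
  ∀ v ∈ S, p * ((S.card : ℝ) - 1) ≤ (degIn G S v : ℝ)

/-- `S` induces a relatively `q`-full subgraph: every `v ∈ S` has at least `q · d_G(v)`
neighbours inside `S`. -/
def RelFull {V : Type*} [Fintype V] (G : SimpleGraph V) (q : ℝ) (S : Finset V) : Prop :=
  ∀ v ∈ S, q * (G.degree v : ℝ) ≤ (degIn G S v : ℝ)

/-! Encode a partition of the vertices into `r` parts as `φ : V → Fin r`, start from one with
all parts of size `⌊n/r⌋` or `⌈n/r⌉`, and among the partitions with the same part sizes take one
with the most edges inside the parts. Suppose no part `P`, and no `P + x`, is relatively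
`1/r`-full. A vertex `v` with fewer than `d(v)/r` neighbours in its own part has more than
`d(v)/r` in some other part `P'`; as `P' + v` is not full, some `u ∈ P'` has fewer than
`d(u)/r - [u ~ v]` neighbours in `P'`, and we continue from `u` with slack `[u ~ v]`. Once the
parts along this chain repeat, moving each vertex of the cycle into the part of its successor
keeps the part sizes, and the slacks telescope to show that it strictly increases the number of
edges inside the parts: a contradiction. -/

open Finset Function

lemma exists_seq_of_forall_exists {α : Type*} {P : α → Prop} {R : α → α → Prop}
    (h : ∀ a, P a → ∃ b, P b ∧ R a b) {a₀ : α} (ha₀ : P a₀) :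
    ∃ f : ℕ → α, ∀ n, P (f n) ∧ R (f n) (f (n + 1)) := by
  choose g hgP hgR using h
  let s : {a // P a} → {a // P a} := fun a => ⟨g a a.2, hgP a a.2⟩
  refine ⟨fun n => (s^[n] ⟨a₀, ha₀⟩).1, fun n => ⟨(s^[n] _).2, ?_⟩⟩
  simp only [iterate_succ_apply']
  exact hgR _ _

lemma exists_lt_eq_injOn_Iio {β : Type*} [Finite β] (f : ℕ → β) :
    ∃ a b, a < b ∧ f a = f b ∧ Set.InjOn f (Set.Iio b) := by
  have hex : ∃ b a, a < b ∧ f a = f b := by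
    obtain ⟨x, y, hxy, hne⟩ : ∃ x y, f x = f y ∧ x ≠ y := by
      simpa [Injective] using not_injective_infinite_finite f
    rcases hne.lt_or_gt with h | h
    exacts [⟨y, x, h, hxy⟩, ⟨x, y, h, hxy.symm⟩]
  obtain ⟨a, hab, hfab⟩ := Nat.find_spec hex
  refine ⟨a, _, hab, hfab, fun x hx y hy hxy => ?_⟩
  by_contra hne
  rcases Ne.lt_or_gt hne with h | h
  · exact absurd (Nat.find_min' hex ⟨x, h, hxy⟩) (not_le.2 hy)
  · exact absurd (Nat.find_min' hex ⟨y, h, hxy.symm⟩) (not_le.2 hx)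

lemma sum_pos_of_le_add_comp_perm {ι M : Type*} [Fintype ι] [AddCommMonoid M] [PartialOrder M]
    [IsOrderedCancelAddMonoid M] (σ : Equiv.Perm ι) {g k : ι → M} (h : ∀ t, k t ≤ g t + k (σ t))
    {t₀ : ι} (ht₀ : k t₀ < g t₀ + k (σ t₀)) : 0 < ∑ t, g t := by
  have := sum_lt_sum (fun t _ => h t) ⟨t₀, mem_univ _, ht₀⟩
  rwa [sum_add_distrib, Equiv.sum_comp σ k, lt_add_iff_pos_left] at this

section DegIn

variable {V : Type*} (G : SimpleGraph V) {S : Finset V} {x y : V}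

lemma degIn_insert (hy : y ∉ S) (v : V) :
    degIn G (insert y S) v = degIn G S v + if G.Adj v y then 1 else 0 := by
  unfold degIn
  rw [filter_insert]
  split_ifs
  · exact card_insert_of_notMem fun h => hy (mem_of_mem_filter _ h)
  · rfl

lemma degIn_insert_self (hy : y ∉ S) : degIn G (insert y S) y = degIn G S y := by
  simp [degIn_insert G hy]

lemma degIn_erase_add (hx : x ∈ S) (v : V) :
    degIn G (S.erase x) v + (if G.Adj v x then 1 else 0) = degIn G S v := by
  rw [← degIn_insert G (notMem_erase x S), insert_erase hx]

lemma degIn_erase_self (x : V) : degIn G (S.erase x) x = degIn G S x := by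
  by_cases hx : x ∈ S
  · simpa using degIn_erase_add G hx x
  · rw [erase_eq_of_notMem hx]

lemma degIn_le_degIn_erase_add_one (x v : V) : degIn G S v ≤ degIn G (S.erase x) v + 1 := by
  by_cases hx : x ∈ S
  · rw [← degIn_erase_add G hx]
    split_ifs <;> omega
  · rw [erase_eq_of_notMem hx]
    omega

lemma sum_ite_adj_eq_degIn (y : V) : ∑ v ∈ S, (if G.Adj v y then 1 else 0) = degIn G S y := by
  rw [degIn, card_filter]
  exact sum_congr rfl fun u _ => if_congr (G.adj_comm u y) rfl rfl

noncomputable def degInSum (S : Finset V) : ℕ := ∑ v ∈ S, degIn G S v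

lemma degInSum_insert (hy : y ∉ S) : degInSum G (insert y S) = degInSum G S + 2 * degIn G S y := by
  rw [degInSum, sum_insert hy, degIn_insert_self G hy,
    sum_congr rfl fun v _ => degIn_insert G hy v, sum_add_distrib, sum_ite_adj_eq_degIn, degInSum]
  ring

lemma degInSum_exchange (hx : x ∈ S) (hy : y ∉ S.erase x) :
    (degInSum G (insert y (S.erase x)) : ℤ) - degInSum G S
      = 2 * ((degIn G (S.erase x) y : ℤ) - degIn G S x) := by
  have hS : degInSum G S = degInSum G (S.erase x) + 2 * degIn G S x := by
    rw [← degIn_erase_self, ← degInSum_insert G (notMem_erase x S), insert_erase hx]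
  rw [degInSum_insert G hy, hS]
  push_cast
  ring

end DegIn

namespace RelFull

variable {V : Type*} (G : SimpleGraph V) {r : ℕ}

/-- Move each `v t` into the part of `v (σ t)`. -/
noncomputable def rotate {ι : Type*} (φ : V → Fin r) (v : ι → V) (σ : Equiv.Perm ι) : V → Fin r :=
  extend v (φ ∘ v ∘ σ) φ

lemma rotate_apply {ι : Type*} {φ : V → Fin r} {v : ι → V} (σ : Equiv.Perm ι)
    (hv : Injective (φ ∘ v)) (t : ι) : rotate φ v σ (v t) = φ (v (σ t)) :=
  hv.of_comp.extend_apply _ _ t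

lemma rotate_apply_of_notMem {ι : Type*} {φ : V → Fin r} {v : ι → V} (σ : Equiv.Perm ι) {w : V}
    (hw : w ∉ Set.range v) : rotate φ v σ w = φ w :=
  extend_apply' _ _ _ hw

variable [Fintype V]

lemma relFull_one_div_iff (hr : 0 < r) (S : Finset V) :
    RelFull G (1 / r) S ↔ ∀ v ∈ S, G.degree v ≤ r * degIn G S v := by
  have hr' : (0 : ℝ) < r := by exact_mod_cast hr
  refine forall₂_congr fun v _ => ?_
  rw [one_div, inv_mul_le_iff₀ hr']
  exact_mod_cast Iff.rfl

def part (φ : V → Fin r) (i : Fin r) : Finset V := {v | φ v = i}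

@[simp] lemma mem_part {φ : V → Fin r} {i : Fin r} {v : V} : v ∈ part φ i ↔ φ v = i := by
  simp [part]

lemma mem_part_self (φ : V → Fin r) (v : V) : v ∈ part φ (φ v) := mem_part.2 rfl

lemma sum_degIn_part (φ : V → Fin r) (v : V) : ∑ i, degIn G (part φ i) v = G.degree v := by
  rw [← G.card_neighborFinset_eq_degree,
    card_eq_sum_card_fiberwise fun u _ => mem_univ (φ u)]
  refine sum_congr rfl fun i _ => congrArg card ?_
  ext u
  simp [and_comm]

noncomputable def partDegInSum (φ : V → Fin r) : ℕ := ∑ i, degInSum G (part φ i)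

lemma exists_part_card_mem_Icc (hr : 0 < r) : ∃ φ : V → Fin r, ∀ i,
    #(part φ i) ∈ Set.Icc ⌊(Fintype.card V : ℝ) / r⌋₊ ⌈(Fintype.card V : ℝ) / r⌉₊ := by
  set n := Fintype.card V
  let e := Fintype.equivFin V
  refine ⟨fun v => ⟨e v % r, Nat.mod_lt _ hr⟩, fun i => ?_⟩
  have hcard : #(part (fun v => (⟨e v % r, Nat.mod_lt _ hr⟩ : Fin r)) i)
      = n / r + if i.val % r < n % r then 1 else 0 := by
    rw [← Nat.count_modEq_card _ hr, Nat.count_eq_card_filter_range, part,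
      card_equiv e (t := {x : Fin n | (x : ℕ) % r = i}) fun v => by simp [Fin.ext_iff],
      ← card_map Fin.valEmbedding, ← Nat.Iio_eq_range, ← Fin.map_valEmbedding_univ, filter_map]
    simp only [Nat.ModEq, Nat.mod_eq_of_lt i.isLt]
    rfl
  rw [hcard, Nat.floor_div_eq_div, Set.mem_Icc]
  refine ⟨by omega, ?_⟩
  split_ifs with h
  · rw [Nat.add_one_le_iff, Nat.lt_ceil, lt_div_iff₀ (by exact_mod_cast hr)]
    have := Nat.div_add_mod n r
    rw [Nat.mul_comm] at this
    exact_mod_cast (show n / r * r < n by omega)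
  · simpa [Nat.floor_div_eq_div] using Nat.floor_le_ceil ((n : ℝ) / r)

lemma exists_partDegInSum_max (φ₀ : V → Fin r) : ∃ φ : V → Fin r,
    (∀ i, #(part φ i) = #(part φ₀ i)) ∧
      ∀ ψ : V → Fin r, (∀ i, #(part ψ i) = #(part φ i)) → partDegInSum G ψ ≤ partDegInSum G φ := by
  obtain ⟨φ, hφ, hmax⟩ := exists_max_image {ψ | ∀ i, #(part ψ i) = #(part φ₀ i)}
    (partDegInSum G) ⟨φ₀, by simp⟩
  simp only [mem_filter, mem_univ, true_and] at hφ hmax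
  exact ⟨φ, hφ, fun ψ hψ => hmax ψ fun i => (hψ i).trans (hφ i)⟩

section Rotate

variable {ι : Type*} {φ : V → Fin r} {v : ι → V} (σ : Equiv.Perm ι)

lemma part_rotate (hv : Injective (φ ∘ v)) (t : ι) :
    part (rotate φ v σ) (φ (v (σ t)))
      = insert (v t) ((part φ (φ (v (σ t)))).erase (v (σ t))) := by
  ext w
  simp only [mem_part, mem_insert, mem_erase]
  by_cases hw : w ∈ Set.range v
  · obtain ⟨s, rfl⟩ := hw
    have hφv : ∀ a b, φ (v a) = φ (v b) ↔ a = b := fun a b => hv.eq_iff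
    rw [rotate_apply σ hv]
    simp only [hφv, hv.of_comp.eq_iff, σ.injective.eq_iff]
    tauto
  · simp only [Set.mem_range, not_exists] at hw
    rw [rotate_apply_of_notMem σ fun ⟨s, hs⟩ => hw s hs]
    simp [Ne.symm (hw _)]

lemma part_rotate_of_notMem (hv : Injective (φ ∘ v)) {i : Fin r} (hi : i ∉ Set.range (φ ∘ v)) :
    part (rotate φ v σ) i = part φ i := by
  ext w
  simp only [mem_part]
  by_cases hw : w ∈ Set.range v
  · obtain ⟨s, rfl⟩ := hw
    simp only [Set.mem_range, comp_apply, not_exists] at hi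
    rw [rotate_apply σ hv]
    simp [hi]
  · rw [rotate_apply_of_notMem σ hw]

lemma notMem_erase_part (hv : Injective (φ ∘ v)) (t : ι) :
    v t ∉ (part φ (φ (v (σ t)))).erase (v (σ t)) := by
  rw [mem_erase, mem_part, not_and]
  exact fun hne h => hne (congrArg v (hv h))

lemma card_part_rotate (hv : Injective (φ ∘ v)) (i : Fin r) :
    #(part (rotate φ v σ) i) = #(part φ i) := by
  by_cases hi : i ∈ Set.range (φ ∘ v ∘ σ)
  · obtain ⟨t, rfl⟩ := hi
    rw [comp_apply, comp_apply, part_rotate σ hv, card_insert_of_notMem (notMem_erase_part σ hv t),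
      card_erase_add_one (mem_part_self φ _)]
  · rw [part_rotate_of_notMem σ hv (by rwa [← σ.surjective.range_comp])]

lemma partDegInSum_rotate [Fintype ι] (hv : Injective (φ ∘ v)) :
    (partDegInSum G (rotate φ v σ) : ℤ) - partDegInSum G φ
      = 2 * ∑ t, ((degIn G ((part φ (φ (v (σ t)))).erase (v (σ t))) (v t) : ℤ)
        - degIn G (part φ (φ (v t))) (v t)) := by
  have hexchange : ∀ t, (degInSum G (part (rotate φ v σ) (φ (v (σ t)))) : ℤ)
      - degInSum G (part φ (φ (v (σ t))))
        = 2 * ((degIn G ((part φ (φ (v (σ t)))).erase (v (σ t))) (v t) : ℤ)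
          - degIn G (part φ (φ (v (σ t)))) (v (σ t))) := fun t => by
    rw [part_rotate σ hv]
    exact degInSum_exchange G (mem_part_self φ _) (notMem_erase_part σ hv t)
  have hrange : Set.range (φ ∘ v ∘ σ) = Set.range (φ ∘ v) := σ.surjective.range_comp (φ ∘ v)
  rw [partDegInSum, partDegInSum, Nat.cast_sum, Nat.cast_sum, ← sum_sub_distrib,
    ← Fintype.sum_of_injective (φ ∘ v ∘ σ) (hv.comp σ.injective) _ _
      (fun i hi => by rw [part_rotate_of_notMem σ hv (hrange ▸ hi), sub_self]) (fun _ => rfl)]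
  simp only [comp_apply, hexchange, ← mul_sum, sum_sub_distrib]
  rw [Equiv.sum_comp σ (fun s => (degIn G (part φ (φ (v s))) (v s) : ℤ))]

end Rotate

section Chain

variable {φ : V → Fin r}

def Deficient (φ : V → Fin r) (v : V) (k : ℕ) : Prop :=
  r * (degIn G (part φ (φ v)) v + k) < G.degree v

/-- The slack `l` of `u` pays for the edge `uv` lost when `v` takes the place of `u`. -/
def Leads (φ : V → Fin r) (v : V) (k : ℕ) (u : V) (l : ℕ) : Prop :=
  degIn G (part φ (φ v)) v + k < degIn G (part φ (φ u)) v ∧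
    degIn G (part φ (φ v)) v + k < degIn G ((part φ (φ u)).erase u) v + l

lemma exists_deficient_leads (hr : 0 < r)
    (hins : ∀ i, ∀ x ∉ part φ i, ¬RelFull G (1 / r) (insert x (part φ i)))
    {v : V} {k : ℕ} (hv : Deficient G φ v k) : ∃ u l, Deficient G φ u l ∧ Leads G φ v k u l := by
  obtain ⟨j, hj⟩ : ∃ j, G.degree v < r * degIn G (part φ j) v := by
    by_contra! hle
    have hown : r * degIn G (part φ (φ v)) v < G.degree v :=
      (Nat.mul_le_mul_left r (Nat.le_add_right _ k)).trans_lt hv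
    have := sum_lt_sum (fun j _ => hle j) ⟨φ v, mem_univ _, hown⟩
    rw [← mul_sum, sum_degIn_part, sum_const, card_univ, Fintype.card_fin, smul_eq_mul] at this
    exact lt_irrefl _ this
  have hvk : degIn G (part φ (φ v)) v + k < degIn G (part φ j) v :=
    Nat.lt_of_mul_lt_mul_left (hv.trans hj)
  have hvj : v ∉ part φ j := fun h => by rw [mem_part.1 h] at hvk; omega
  obtain ⟨u, hu, hdef⟩ : ∃ u ∈ insert v (part φ j),
      r * degIn G (insert v (part φ j)) u < G.degree u := by
    have h := hins j v hvj
    rw [relFull_one_div_iff G hr] at h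
    push Not at h
    exact h
  have huv : u ≠ v := by
    rintro rfl
    rw [degIn_insert_self G hvj] at hdef
    exact lt_asymm hdef hj
  have huj : φ u = j := mem_part.1 ((mem_insert.1 hu).resolve_left huv)
  rw [degIn_insert G hvj] at hdef
  refine ⟨u, if G.Adj u v then 1 else 0, by rwa [Deficient, huj], ?_, ?_⟩
  · rwa [huj]
  · rw [huj, G.adj_comm, degIn_erase_add G (mem_part.2 huj)]
    exact hvk

lemma exists_cycle_of_leads {v : ℕ → V} {k : ℕ → ℕ}
    (h : ∀ n, Leads G φ (v n) (k n) (v (n + 1)) (k (n + 1))) :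
    ∃ a m, Injective (fun t : Fin (m + 2) => φ (v (a + t))) ∧ φ (v (a + m + 2)) = φ (v a) := by
  obtain ⟨a, b, hab, hrep, hinj⟩ := exists_lt_eq_injOn_Iio (φ ∘ v)
  have hmove : φ (v (a + 1)) ≠ φ (v a) := fun heq => by
    have := (h a).1
    rw [heq] at this
    omega
  obtain ⟨m, rfl⟩ : ∃ m, b = a + m + 2 := ⟨b - a - 2, by
    have : b ≠ a + 1 := fun hb => hmove (hb ▸ hrep.symm)
    omega⟩
  refine ⟨a, m, fun s t hst => ?_, hrep.symm⟩
  exact Fin.ext (Nat.add_left_cancel (hinj (Set.mem_Iio.2 (by omega)) (Set.mem_Iio.2 (by omega)) hst))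

lemma exists_partDegInSum_lt_of_leads (v : ℕ → V) (k : ℕ → ℕ)
    (h : ∀ n, Leads G φ (v n) (k n) (v (n + 1)) (k (n + 1))) :
    ∃ ψ : V → Fin r, (∀ i, #(part ψ i) = #(part φ i)) ∧ partDegInSum G φ < partDegInSum G ψ := by
  obtain ⟨a, m, hw, hrep⟩ := exists_cycle_of_leads G h
  set w : Fin (m + 2) → V := fun t => v (a + t)
  set σ := finRotate (m + 2)
  set gain : Fin (m + 2) → ℤ := fun t =>
    (degIn G ((part φ (φ (w (σ t)))).erase (w (σ t))) (w t) : ℤ) - degIn G (part φ (φ (w t))) (w t)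
  have hstep : ∀ t ≠ Fin.last (m + 1), (k (a + t) : ℤ) < gain t + k (a + σ t) := by
    intro t ht
    have hσ : a + (σ t : ℕ) = a + t + 1 := by rw [coe_finRotate_of_ne_last ht]; ring
    have := (h (a + t)).2
    simp only [gain, w, hσ]
    omega
  -- Closing the cycle, `v (a + m + 1)` displaces `v a` instead of its successor `v (a + m + 2)`:
  -- only the first half of `Leads` applies, and the erased vertex costs at most the slack.
  have hlast : (k (a + Fin.last (m + 1)) : ℤ)
      ≤ gain (Fin.last (m + 1)) + k (a + σ (Fin.last (m + 1))) := by
    have hσ : σ (Fin.last (m + 1)) = 0 := finRotate_last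
    have hlead := (h (a + m + 1)).1
    rw [show φ (v (a + m + 1 + 1)) = φ (v a) from hrep] at hlead
    have := degIn_le_degIn_erase_add_one G (S := part φ (φ (v a))) (v a) (v (a + m + 1))
    simp only [gain, w, hσ, Fin.val_last, Fin.val_zero, add_zero, ← add_assoc]
    omega
  have hgain : 0 < ∑ t, gain t := by
    refine sum_pos_of_le_add_comp_perm σ (k := fun t => (k (a + t) : ℤ)) (fun t => ?_)
      (hstep 0 Fin.last_pos.ne)
    by_cases ht : t = Fin.last (m + 1)
    · exact ht ▸ hlast
    · exact (hstep t ht).le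
  have hrot : (partDegInSum G (rotate φ w σ) : ℤ) - partDegInSum G φ = 2 * ∑ t, gain t :=
    partDegInSum_rotate G σ hw
  exact ⟨rotate φ w σ, card_part_rotate σ hw, by omega⟩

lemma exists_relFull_part_or_insert (hr : 0 < r)
    (hmax : ∀ ψ : V → Fin r, (∀ i, #(part ψ i) = #(part φ i)) → partDegInSum G ψ ≤ partDegInSum G φ) :
    ∃ i, RelFull G (1 / r) (part φ i) ∨ ∃ x ∉ part φ i, RelFull G (1 / r) (insert x (part φ i)) := by
  by_contra! h
  obtain ⟨v₀, hv₀, hdef⟩ : ∃ v ∈ part φ ⟨0, hr⟩, r * degIn G (part φ ⟨0, hr⟩) v < G.degree v := by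
    have h₀ := (h ⟨0, hr⟩).1
    rw [relFull_one_div_iff G hr] at h₀
    push Not at h₀
    exact h₀
  rw [mem_part] at hv₀
  obtain ⟨f, hf⟩ := exists_seq_of_forall_exists (P := fun p : V × ℕ => Deficient G φ p.1 p.2)
    (R := fun p q : V × ℕ => Leads G φ p.1 p.2 q.1 q.2)
    (fun _ hp => by
      obtain ⟨u, l, hl⟩ := exists_deficient_leads G hr (fun i => (h i).2) hp
      exact ⟨(u, l), hl⟩)
    (a₀ := (v₀, 0)) (by simpa [Deficient, hv₀] using hdef)
  obtain ⟨ψ, hcard, hlt⟩ := exists_partDegInSum_lt_of_leads G _ _ fun n => (hf n).2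
  exact absurd (hmax ψ hcard) (not_le.2 hlt)

end Chain

end RelFull

/-- for every positive integer `r`, an `n`-vertex graph contains a
relatively `(1/r)`-full subgraph on `⌊n/r⌋`, `⌈n/r⌉` or `⌈n/r⌉ + 1` vertices. -/
theorem stmt13 {V : Type*} [Fintype V] (G : SimpleGraph V) (r : ℕ) (hr : 0 < r) :
    ∃ S : Finset V, RelFull G (1/(r : ℝ)) S ∧
      (S.card = ⌊(Fintype.card V : ℝ) / r⌋₊ ∨ S.card = ⌈(Fintype.card V : ℝ) / r⌉₊ ∨
       S.card = ⌈(Fintype.card V : ℝ) / r⌉₊ + 1) := by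
  obtain ⟨φ₀, hφ₀⟩ := RelFull.exists_part_card_mem_Icc (V := V) hr
  obtain ⟨φ, hcard, hmax⟩ := RelFull.exists_partDegInSum_max G φ₀
  have hfloor_ceil := Nat.floor_le_ceil ((Fintype.card V : ℝ) / r)
  have hceil_floor := Nat.ceil_le_floor_add_one ((Fintype.card V : ℝ) / r)
  obtain ⟨i, hi | ⟨x, hx, hix⟩⟩ := RelFull.exists_relFull_part_or_insert G hr hmax
  all_goals obtain ⟨hlo, hhi⟩ := hcard i ▸ hφ₀ i
  · exact ⟨_, hi, by omega⟩
  · exact ⟨_, hix, by rw [Finset.card_insert_of_notMem hx]; omega⟩
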